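/- arXiv:2504.00653 — 2 statements merged into one kernel-verified Lean document; each statement's English description precedes it below -/
import Mathlib

section
/- Let S be positive definite with S and q·S⁻¹ integral, and let A be an integral invertible r×r matrix with Aℤʳ ⊇ qℤʳ + Sℤʳ. Set S̃ = A'S⁻¹A. If V is an r×g rational matrix such that S⁻¹[V] = V'S⁻¹V and q·S⁻¹V are integral, and G is an integral r×g matrix, then S̃⁻¹[A'S⁻¹V + qA'S⁻¹G] = S⁻¹[V + qG]; in particular it is integral, i.e. A'S⁻¹V + qA'S⁻¹G is isotropic for (S̃, q). -/
open Matrix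

def IsIntegralMatrix {m n : Type*} (M : Matrix m n ℚ) : Prop :=
  ∀ i j, ∃ z : ℤ, M i j = (z : ℚ)

lemma isIntegral_iff_mem_bot {m n : Type*} (M : Matrix m n ℚ) :
    IsIntegralMatrix M ↔ ∀ i j, M i j ∈ (⊥ : Subring ℚ) := by
  simp [IsIntegralMatrix, Subring.mem_bot, eq_comm]

lemma IsIntegralMatrix.mul {m n p : Type*} [Fintype n] {M : Matrix m n ℚ}
    {N : Matrix n p ℚ} (hM : IsIntegralMatrix M) (hN : IsIntegralMatrix N) :
    IsIntegralMatrix (M * N) := by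
  rw [isIntegral_iff_mem_bot] at *
  intro i j
  rw [Matrix.mul_apply]
  exact Subring.sum_mem _ fun k _ => mul_mem (hM i k) (hN k j)

lemma IsIntegralMatrix.add {m n : Type*} {M N : Matrix m n ℚ}
    (hM : IsIntegralMatrix M) (hN : IsIntegralMatrix N) :
    IsIntegralMatrix (M + N) := by
  rw [isIntegral_iff_mem_bot] at *
  intro i j
  exact add_mem (hM i j) (hN i j)

lemma IsIntegralMatrix.transpose {m n : Type*} {M : Matrix m n ℚ}
    (hM : IsIntegralMatrix M) : IsIntegralMatrix Mᵀ := fun i j => hM j i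

lemma IsIntegralMatrix.natSmul {m n : Type*} (q : ℕ) {M : Matrix m n ℚ}
    (hM : IsIntegralMatrix M) : IsIntegralMatrix ((q : ℚ) • M) := by
  rw [isIntegral_iff_mem_bot] at *
  intro i j
  rw [Matrix.smul_apply, smul_eq_mul]
  exact mul_mem (Subring.mem_bot.mpr ⟨(q : ℤ), by push_cast; ring⟩) (hM i j)

theorem stmt_6 (r g q : ℕ) (hq : 0 < q)
    (S A : Matrix (Fin r) (Fin r) ℚ)
    (hsym : S.IsSymm)
    (hpos : ∀ x : Fin r → ℚ, x ≠ 0 → 0 < x ⬝ᵥ S.mulVec x)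
    (hS : IsIntegralMatrix S)
    (hqS : IsIntegralMatrix ((q : ℚ) • S⁻¹))
    (hA : IsIntegralMatrix A)
    (hAunit : IsUnit A.det)
    (hqA : IsIntegralMatrix ((q : ℚ) • A⁻¹))
    (hAS : IsIntegralMatrix (A⁻¹ * S))
    (V : Matrix (Fin r) (Fin g) ℚ)
    (hViso1 : IsIntegralMatrix (Vᵀ * S⁻¹ * V))
    (hViso2 : IsIntegralMatrix ((q : ℚ) • (S⁻¹ * V)))
    (G : Matrix (Fin r) (Fin g) ℚ) (hG : IsIntegralMatrix G) :
    let Stilde := Aᵀ * S⁻¹ * A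
    let W := Aᵀ * S⁻¹ * V + (q : ℚ) • (Aᵀ * S⁻¹ * G)
    Wᵀ * Stilde⁻¹ * W =
      (V + (q : ℚ) • G)ᵀ * S⁻¹ * (V + (q : ℚ) • G) ∧
    IsIntegralMatrix (Wᵀ * Stilde⁻¹ * W) ∧
    IsIntegralMatrix ((q : ℚ) • (Stilde⁻¹ * W)) := by
  intro Stilde W
  -- S is invertible
  have hSdet : IsUnit S.det := by
    rw [isUnit_iff_ne_zero]
    intro h
    obtain ⟨v, hv, hv0⟩ := (Matrix.exists_mulVec_eq_zero_iff).mpr h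
    have := hpos v hv
    rw [hv0, dotProduct_zero] at this
    exact lt_irrefl _ this
  have hSS : S * S⁻¹ = 1 := Matrix.mul_nonsing_inv S hSdet
  have hAA : A * A⁻¹ = 1 := Matrix.mul_nonsing_inv A hAunit
  have hATdet : IsUnit Aᵀ.det := by rwa [Matrix.det_transpose]
  have hATA : Aᵀ⁻¹ * Aᵀ = 1 := Matrix.nonsing_inv_mul Aᵀ hATdet
  have hSinvT : S⁻¹ᵀ = S⁻¹ := by
    rw [Matrix.transpose_nonsing_inv, hsym.eq]
  set X := V + (q : ℚ) • G with hX
  have hW : W = Aᵀ * S⁻¹ * X := by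
    simp only [W, hX, Matrix.mul_add, Matrix.mul_smul]
  have hStinv : Stilde⁻¹ = A⁻¹ * (S * Aᵀ⁻¹) := by
    simp only [Stilde]
    rw [Matrix.mul_inv_rev, Matrix.mul_inv_rev, Matrix.nonsing_inv_nonsing_inv S hSdet]
  have hkey : Stilde⁻¹ * W = A⁻¹ * X := by
    rw [hStinv, hW]
    rw [show A⁻¹ * (S * Aᵀ⁻¹) * (Aᵀ * S⁻¹ * X) = A⁻¹ * (S * (Aᵀ⁻¹ * Aᵀ) * (S⁻¹ * X)) by
      simp only [Matrix.mul_assoc], hATA, Matrix.mul_one,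
      ← Matrix.mul_assoc S S⁻¹ X, hSS, Matrix.one_mul]
  have hWT : Wᵀ = Xᵀ * S⁻¹ * A := by
    rw [hW, Matrix.transpose_mul, Matrix.transpose_mul, hSinvT, Matrix.transpose_transpose,
      Matrix.mul_assoc]
  have hmain : Wᵀ * Stilde⁻¹ * W = Xᵀ * S⁻¹ * X := by
    rw [Matrix.mul_assoc, hkey, hWT]
    rw [show Xᵀ * S⁻¹ * A * (A⁻¹ * X) = Xᵀ * S⁻¹ * (A * A⁻¹) * X by
      simp only [Matrix.mul_assoc], hAA, Matrix.mul_one]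
  refine ⟨hmain, ?_, ?_⟩
  · rw [hmain]
    have hexp : Xᵀ * S⁻¹ * X =
        Vᵀ * S⁻¹ * V + ((q : ℚ) • (S⁻¹ * V))ᵀ * G
          + Gᵀ * ((q : ℚ) • (S⁻¹ * V)) + Gᵀ * ((q : ℚ) • S⁻¹) * ((q : ℚ) • G) := by
      simp only [hX, Matrix.transpose_add, Matrix.transpose_smul, Matrix.add_mul,
        Matrix.mul_add, Matrix.smul_mul, Matrix.mul_smul, Matrix.transpose_mul, hSinvT,
        smul_smul, smul_add, Matrix.mul_assoc]
      abel
    rw [hexp]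
    have hqG : IsIntegralMatrix ((q : ℚ) • G) := hG.natSmul q
    exact ((hViso1.add ((hViso2.transpose).mul hG)).add (hG.transpose.mul hViso2)).add
      ((hG.transpose.mul hqS).mul hqG)
  · rw [hkey]
    have : (q : ℚ) • (A⁻¹ * X) =
        (A⁻¹ * S) * ((q : ℚ) • (S⁻¹ * V)) + ((q : ℚ) • A⁻¹) * ((q : ℚ) • G) := by
      simp only [hX, Matrix.mul_add, Matrix.smul_mul, Matrix.mul_smul, smul_add, smul_smul]
      congr 1
      · rw [← Matrix.mul_assoc, Matrix.mul_assoc A⁻¹ S S⁻¹, hSS, Matrix.mul_one]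
    rw [this]
    exact (hAS.mul hViso2).add (hqA.mul (hG.natSmul q))
end

section
/- Let q be a positive integer and S a positive definite symmetric r×r matrix with S and q²S⁻¹ integral. The property of an r×g integer matrix V being isotropic for (S,q) (i.e. S⁻¹[V] and qS⁻¹V integral) depends only on the columns of V modulo the subgroup qℤʳ + Sℤʳ of ℤʳ. -/
open Matrix

/-- `V` is isotropic for `(S, q)`: `S⁻¹[V] = Vᵀ S⁻¹ V` and `q S⁻¹ V` are integral. -/
def IsIsotropic {r g : ℕ} (S : Matrix (Fin r) (Fin r) ℚ) (q : ℕ)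
    (V : Matrix (Fin r) (Fin g) ℚ) : Prop :=
  IsIntegralMatrix (Vᵀ * S⁻¹ * V) ∧ IsIntegralMatrix ((q : ℚ) • (S⁻¹ * V))

namespace IsoAux

noncomputable def R : Subring ℚ := (Int.castRingHom ℚ).range

lemma mem_iff {m n : Type*} (M : Matrix m n ℚ) :
    IsIntegralMatrix M ↔ ∀ i j, M i j ∈ R := by
  unfold IsIntegralMatrix R
  refine forall₂_congr fun i j => ?_
  simp only [RingHom.mem_range, Int.coe_castRingHom]
  exact exists_congr fun z => eq_comm

lemma int_add {m n : Type*} {M N : Matrix m n ℚ} (hM : IsIntegralMatrix M)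
    (hN : IsIntegralMatrix N) : IsIntegralMatrix (M + N) := by
  rw [mem_iff] at *
  intro i j
  exact add_mem (hM i j) (hN i j)

lemma int_mul {m n k : Type*} [Fintype n] {M : Matrix m n ℚ} {N : Matrix n k ℚ}
    (hM : IsIntegralMatrix M) (hN : IsIntegralMatrix N) : IsIntegralMatrix (M * N) := by
  rw [mem_iff] at *
  intro i j
  rw [Matrix.mul_apply]
  exact Subring.sum_mem _ fun c _ => mul_mem (hM i c) (hN c j)

lemma int_smul {m n : Type*} (z : ℤ) {M : Matrix m n ℚ} (hM : IsIntegralMatrix M) :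
    IsIntegralMatrix ((z : ℚ) • M) := by
  rw [mem_iff] at *
  intro i j
  exact mul_mem (by exact ⟨z, rfl⟩) (hM i j)

lemma int_nat_smul {m n : Type*} (q : ℕ) {M : Matrix m n ℚ} (hM : IsIntegralMatrix M) :
    IsIntegralMatrix ((q : ℚ) • M) := by
  have := int_smul (q : ℤ) hM
  simpa using this

lemma int_transpose {m n : Type*} {M : Matrix m n ℚ} (hM : IsIntegralMatrix M) :
    IsIntegralMatrix Mᵀ := fun i j => hM j i

lemma int_neg {m n : Type*} {M : Matrix m n ℚ} (hM : IsIntegralMatrix M) :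
    IsIntegralMatrix (-M) := by
  rw [mem_iff] at *
  intro i j
  exact neg_mem (hM i j)

/-- One direction of the key invariance. -/
lemma key {r g : ℕ} (q : ℕ) (S A : Matrix (Fin r) (Fin r) ℚ)
    (hsymS : Sᵀ = S) (hsymA : Aᵀ = A)
    (hSA : S * A = 1) (hAS : A * S = 1)
    (hSint : IsIntegralMatrix S)
    (hq2A : IsIntegralMatrix (((q : ℚ) ^ 2) • A))
    (W U₁ U₂ : Matrix (Fin r) (Fin g) ℚ)
    (hW : IsIntegralMatrix W) (hU₁ : IsIntegralMatrix U₁) (hU₂ : IsIntegralMatrix U₂)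
    (h1 : IsIntegralMatrix (Wᵀ * A * W)) (h2 : IsIntegralMatrix ((q : ℚ) • (A * W))) :
    IsIntegralMatrix ((W + (q : ℚ) • U₁ + S * U₂)ᵀ * A * (W + (q : ℚ) • U₁ + S * U₂)) ∧
    IsIntegralMatrix ((q : ℚ) • (A * (W + (q : ℚ) • U₁ + S * U₂))) := by
  have hc1 : ∀ X : Matrix (Fin r) (Fin g) ℚ, A * (S * X) = X := by
    intro X; rw [← Matrix.mul_assoc, hAS, Matrix.one_mul]
  have hc2 : ∀ X : Matrix (Fin r) (Fin g) ℚ, S * (A * X) = X := by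
    intro X; rw [← Matrix.mul_assoc, hSA, Matrix.one_mul]
  constructor
  · have e1 : (W + (q : ℚ) • U₁ + S * U₂)ᵀ * A * (W + (q : ℚ) • U₁ + S * U₂) =
        Wᵀ * A * W + ((q : ℚ) • (A * W))ᵀ * U₁ + Wᵀ * U₂
        + U₁ᵀ * ((q : ℚ) • (A * W)) + U₁ᵀ * ((((q : ℚ) ^ 2) • A) * U₁) + (q : ℚ) • (U₁ᵀ * U₂)
        + U₂ᵀ * W + (q : ℚ) • (U₂ᵀ * U₁) + U₂ᵀ * (S * U₂) := by
      simp only [Matrix.transpose_add, Matrix.transpose_smul, Matrix.transpose_mul,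
        Matrix.add_mul, Matrix.mul_add, Matrix.smul_mul, Matrix.mul_smul,
        Matrix.mul_assoc, hsymS, hsymA, hc1, hc2, smul_smul, sq, smul_add]
      abel
    rw [e1]
    exact int_add (int_add (int_add (int_add (int_add (int_add (int_add (int_add
      h1
      (int_mul (int_transpose h2) hU₁))
      (int_mul (int_transpose hW) hU₂))
      (int_mul (int_transpose hU₁) h2))
      (int_mul (int_transpose hU₁) (int_mul hq2A hU₁)))
      (int_nat_smul q (int_mul (int_transpose hU₁) hU₂)))
      (int_mul (int_transpose hU₂) hW))
      (int_nat_smul q (int_mul (int_transpose hU₂) hU₁)))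
      (int_mul (int_transpose hU₂) (int_mul hSint hU₂))
  · have e2 : (q : ℚ) • (A * (W + (q : ℚ) • U₁ + S * U₂)) =
        (q : ℚ) • (A * W) + (((q : ℚ) ^ 2) • A) * U₁ + (q : ℚ) • U₂ := by
      simp only [Matrix.mul_add, smul_add, Matrix.mul_smul, smul_smul, Matrix.smul_mul,
        hc1, sq]
    rw [e2]
    exact int_add (int_add h2 (int_mul hq2A hU₁)) (int_nat_smul q hU₂)

end IsoAux

theorem stmt_11 (r g q : ℕ) (hq : 0 < q)
    (S : Matrix (Fin r) (Fin r) ℚ)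
    (hsym : S.IsSymm)
    (hpos : ∀ x : Fin r → ℚ, x ≠ 0 → 0 < x ⬝ᵥ S.mulVec x)
    (hS : IsIntegralMatrix S)
    (hq2S : IsIntegralMatrix (((q : ℚ) ^ 2) • S⁻¹))
    (V W : Matrix (Fin r) (Fin g) ℚ)
    (hV : IsIntegralMatrix V) (hW : IsIntegralMatrix W)
    (hdiff : ∃ U₁ U₂ : Matrix (Fin r) (Fin g) ℚ,
      IsIntegralMatrix U₁ ∧ IsIntegralMatrix U₂ ∧
      V - W = (q : ℚ) • U₁ + S * U₂) :
    IsIsotropic S q V ↔ IsIsotropic S q W := by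
  obtain ⟨U₁, U₂, hU₁, hU₂, hVW⟩ := hdiff
  have hdet : S.det ≠ 0 := by
    intro h0
    obtain ⟨v, hv0, hv⟩ := Matrix.exists_mulVec_eq_zero_iff.mpr h0
    have := hpos v hv0
    rw [hv] at this
    simp at this
  have hSA : S * S⁻¹ = 1 := Matrix.mul_nonsing_inv S (isUnit_iff_ne_zero.mpr hdet)
  have hAS : S⁻¹ * S = 1 := Matrix.nonsing_inv_mul S (isUnit_iff_ne_zero.mpr hdet)
  have hsymS : Sᵀ = S := hsym
  have hsymA : (S⁻¹)ᵀ = S⁻¹ := by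
    rw [Matrix.transpose_nonsing_inv, hsymS]
  have hVeq : V = W + (q : ℚ) • U₁ + S * U₂ := by
    rw [add_assoc, ← hVW]; abel
  have hWeq : W = V + (q : ℚ) • (-U₁) + S * (-U₂) := by
    rw [smul_neg, Matrix.mul_neg]
    have := sub_eq_iff_eq_add.mp hVW
    rw [add_assoc]
    rw [this]
    abel
  constructor
  · intro hVi
    rw [IsIsotropic] at *
    rw [hWeq]
    exact IsoAux.key q S S⁻¹ hsymS hsymA hSA hAS hS hq2S V (-U₁) (-U₂) hV
      (IsoAux.int_neg hU₁) (IsoAux.int_neg hU₂) hVi.1 hVi.2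
  · intro hWi
    rw [IsIsotropic] at *
    rw [hVeq]
    exact IsoAux.key q S S⁻¹ hsymS hsymA hSA hAS hS hq2S W U₁ U₂ hW hU₁ hU₂ hWi.1 hWi.2
end
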